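/- Gentle operator lemma for ensembles: Let 𝒳 be a finite set, p a probability distribution on 𝒳, and (ρ_x)_{x∈𝒳} density matrices on ℂ^d with average ρ̄ := ∑_x p(x) ρ_x. Let Λ be a d×d complex matrix with 0 ≤ Λ ≤ I и suppose Tr[Λρ̄] ≥ 1 − ε for some ε ∈ [0,1]. Then ∑_{x∈𝒳} p(x) ‖√Λ ρ_x √Λ − ρ_x‖₁ ≤ 2√ε, where √Λ denotes the positive semidefinite square root of Λ. -/

import Mathlib

open scoped BigOperators ComplexOrder

/-- The positive semidefinite square root of a positive semidefinite matrix
(the definition removed from Mathlib, restored verbatim). -/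
noncomputable def Matrix.PosSemidef.sqrt {n : Type*} [Fintype n] [DecidableEq n] {𝕜 : Type*}
    [RCLike 𝕜] {A : Matrix n n 𝕜} (hA : A.PosSemidef) : Matrix n n 𝕜 :=
  hA.1.eigenvectorUnitary.1 * Matrix.diagonal ((↑) ∘ (√·) ∘ hA.1.eigenvalues) *
  (star hA.1.eigenvectorUnitary : Matrix n n 𝕜)

/-- Trace norm `‖A‖₁ = Tr √(AᴴA)` of a complex square matrix. -/
noncomputable def traceNorm {ι : Type*} [Fintype ι] [DecidableEq ι] (A : Matrix ι ι ℂ) : ℝ :=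
  (Matrix.posSemidef_conjTranspose_mul_self A).sqrt.trace.re

/-!
For a single state write `S = √Λ`. If `W` is the sign of the Hermitian matrix `SρS - ρ`,
then `‖SρS - ρ‖₁ = Re Tr (W (SρS - ρ))` and `W (SρS - ρ) = -(WS ρ (1 - S) + W(1 - S) ρ)`.
Cauchy–Schwarz for the `ρ`-weighted inner product `⟨X, Y⟩ = Tr (Y ρ Xᴴ)` bounds each term by
`√Tr ((1 - S) ρ (1 - S))`, which is at most `√Tr ((1 - Λ) ρ) = √(1 - Tr (Λρ))` because
`(1 - S)² ≤ 1 - S²` for `0 ≤ S ≤ 1`. Averaging over the ensemble, concavity of the square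
root turns `∑ₓ p(x) · 2√(1 - Tr (Λρₓ))` into at most `2√(1 - Tr (Λρ̄)) ≤ 2√ε`.
-/

open scoped MatrixOrder
open Matrix

lemma CFC.le_sqrt_of_le_one {A : Type*} [PartialOrder A] [Ring A] [StarRing A]
    [TopologicalSpace A] [IsSemitopologicalRing A] [T2Space A] [StarOrderedRing A] [Algebra ℝ A]
    [ContinuousFunctionalCalculus ℝ A IsSelfAdjoint] [NonnegSpectrumClass ℝ A]
    {a : A} (h0 : 0 ≤ a) (h1 : a ≤ 1) : a ≤ CFC.sqrt a := by
  rw [CFC.sqrt_eq_real_sqrt a, cfcₙ_eq_cfc]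
  nth_rw 1 [← cfc_id' ℝ a]
  rw [CFC.le_one_iff (R := ℝ) a] at h1
  refine cfc_mono fun x hx => ?_
  have hx0 := spectrum_nonneg_of_nonneg h0 hx
  exact (Real.le_sqrt hx0 hx0).2 (by nlinarith [h1 x hx])

section

variable {n : Type*} [Fintype n]

namespace Matrix

lemma norm_trace_mul_mul_le {ρ : Matrix n n ℂ} (hρ : ρ.PosSemidef) (A B : Matrix n n ℂ) :
    ‖(A * ρ * B).trace‖ ≤ √(A * ρ * Aᴴ).trace.re * √(Bᴴ * ρ * B).trace.re := by
  let := ρ.toMatrixSeminormedAddCommGroup hρ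
  let := ρ.toMatrixInnerProductSpace hρ
  have h := norm_inner_le_norm (𝕜 := ℂ) Bᴴ A
  rw [norm_eq_sqrt_re_inner (𝕜 := ℂ) Bᴴ, norm_eq_sqrt_re_inner (𝕜 := ℂ) A] at h
  change ‖(A * ρ * Bᴴᴴ).trace‖ ≤
    √(Bᴴ * ρ * Bᴴᴴ).trace.re * √(A * ρ * Aᴴ).trace.re at h
  rwa [conjTranspose_conjTranspose, mul_comm] at h

variable [DecidableEq n]

lemma trace_mul_mul_conjTranspose_mul_left {W : Matrix n n ℂ} (hW : Wᴴ * W = 1)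
    (A ρ : Matrix n n ℂ) : (W * A * ρ * (W * A)ᴴ).trace = (A * ρ * Aᴴ).trace := by
  rw [conjTranspose_mul, show W * A * ρ * (Aᴴ * Wᴴ) = W * (A * ρ * Aᴴ) * Wᴴ by noncomm_ring,
    trace_mul_cycle, hW, one_mul]

lemma PosSemidef.sqrt_eq_cfcSqrt {A : Matrix n n ℂ} (hA : A.PosSemidef) :
    hA.sqrt = CFC.sqrt A := by
  rw [CFC.sqrt_eq_real_sqrt A hA.nonneg, cfcₙ_eq_cfc, hA.1.cfc_eq, IsHermitian.cfc,
    Unitary.conjStarAlgAut_apply]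
  rfl

lemma re_trace_mul_nonneg {A B : Matrix n n ℂ} (hA : 0 ≤ A) (hB : B.PosSemidef) :
    0 ≤ (A * B).trace.re := by
  have hs : (CFC.sqrt A)ᴴ = CFC.sqrt A := (CFC.sqrt_nonneg A).posSemidef.1
  have h : (CFC.sqrt A * B * (CFC.sqrt A)ᴴ).trace = (A * B).trace := by
    rw [hs, trace_mul_cycle, CFC.sqrt_mul_sqrt_self A]
  rw [← h]
  exact (Complex.nonneg_iff.1 (hB.mul_mul_conjTranspose_same _).trace_nonneg).1

lemma re_trace_mul_le_re_trace {A B : Matrix n n ℂ} (hA : A ≤ 1) (hB : B.PosSemidef) :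
    (A * B).trace.re ≤ B.trace.re := by
  have h := re_trace_mul_nonneg (sub_nonneg.2 hA) hB
  rwa [sub_mul, one_mul, trace_sub, Complex.sub_re, sub_nonneg] at h

end Matrix

lemma traceNorm_eq_re_trace_abs [DecidableEq n] (A : Matrix n n ℂ) :
    traceNorm A = (CFC.abs A).trace.re := by
  rw [traceNorm, PosSemidef.sqrt_eq_cfcSqrt, CFC.abs, star_eq_conjTranspose]

/-- The sign of `H` (taking `+1` on the kernel) is a self-adjoint unitary `W` with `|H| = W H`. -/
lemma Matrix.IsHermitian.exists_traceNorm_eq_re_trace_mul [DecidableEq n] {H : Matrix n n ℂ}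
    (hH : H.IsHermitian) :
    ∃ W : Matrix n n ℂ, Wᴴ * W = 1 ∧ traceNorm H = (W * H).trace.re := by
  let sgn : ℝ → ℝ := fun x => if 0 ≤ x then 1 else -1
  have hc : ContinuousOn sgn (spectrum ℝ H) := H.finite_real_spectrum.continuousOn _
  have hsa : IsSelfAdjoint H := hH
  refine ⟨cfc sgn H, ?_, ?_⟩
  · rw [← star_eq_conjTranspose, (cfc_predicate sgn H).star_eq, ← cfc_mul ..,
      ← cfc_one ℝ H]
    refine cfc_congr fun x _ => ?_
    by_cases hx : 0 ≤ x <;> simp [sgn, hx]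
  · have habs : CFC.abs H = cfc (fun x => sgn x * x) H := by
      rw [CFC.abs_eq_cfc_norm H]
      refine cfc_congr fun x _ => ?_
      by_cases hx : 0 ≤ x
      · simp [sgn, hx, abs_of_nonneg hx]
      · simp [sgn, hx, abs_of_neg (not_le.1 hx)]
    rw [traceNorm_eq_re_trace_abs, habs, cfc_mul .., cfc_id' ℝ H]

section GentleMeasurement

variable [DecidableEq n] {Λ ρ : Matrix n n ℂ}

/-- `(1 - √Λ)² = (1 - Λ) - 2 (√Λ - Λ)`, and `Λ ≤ √Λ` because `0 ≤ Λ ≤ 1`. -/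
lemma re_trace_one_sub_sqrt_conj_le (hΛ0 : 0 ≤ Λ) (hΛ1 : Λ ≤ 1) (hρ : ρ.PosSemidef) :
    ((1 - CFC.sqrt Λ) * ρ * (1 - CFC.sqrt Λ)).trace.re ≤ ((1 - Λ) * ρ).trace.re := by
  set S := CFC.sqrt Λ
  have hsq : (1 - S) * (1 - S) * ρ = (1 - Λ) * ρ - ((S - Λ) * ρ + (S - Λ) * ρ) := by
    rw [← CFC.sqrt_mul_sqrt_self Λ]
    noncomm_ring
  have h := re_trace_mul_nonneg (sub_nonneg.2 (CFC.le_sqrt_of_le_one hΛ0 hΛ1)) hρ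
  rw [trace_mul_cycle, hsq, trace_sub, trace_add, Complex.sub_re, Complex.add_re]
  linarith

theorem traceNorm_sqrt_mul_mul_sqrt_sub_le (hΛ0 : 0 ≤ Λ) (hΛ1 : Λ ≤ 1) (hρ : ρ.PosSemidef)
    (htr : ρ.trace = 1) :
    traceNorm (CFC.sqrt Λ * ρ * CFC.sqrt Λ - ρ) ≤ 2 * √(1 - (Λ * ρ).trace.re) := by
  set S := CFC.sqrt Λ
  have hS : Sᴴ = S := (CFC.sqrt_nonneg Λ).posSemidef.1
  have hS1 : (1 - S)ᴴ = 1 - S := by rw [conjTranspose_sub, conjTranspose_one, hS]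
  have hH : (S * ρ * S - ρ).IsHermitian := by
    rw [IsHermitian, conjTranspose_sub, conjTranspose_mul, conjTranspose_mul, hS, hρ.1,
      mul_assoc]
  obtain ⟨W, hW, hnorm⟩ := hH.exists_traceNorm_eq_re_trace_mul
  set T := ((1 - S) * ρ * (1 - S)).trace.re
  have hTle : T ≤ 1 - (Λ * ρ).trace.re :=
    (re_trace_one_sub_sqrt_conj_le hΛ0 hΛ1 hρ).trans_eq <| by
      rw [sub_mul, one_mul, trace_sub, htr, Complex.sub_re, Complex.one_re]
  have hΛρ : (Λ * ρ).trace.re ≤ 1 := by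
    simpa [htr] using re_trace_mul_le_re_trace hΛ1 hρ
  have hsplit : W * (S * ρ * S - ρ) = -((W * S) * ρ * (1 - S) + (W * (1 - S)) * ρ) := by
    noncomm_ring
  have hfirst : ((W * S) * ρ * (W * S)ᴴ).trace.re = (Λ * ρ).trace.re := by
    rw [trace_mul_mul_conjTranspose_mul_left hW, hS, trace_mul_cycle, CFC.sqrt_mul_sqrt_self Λ]
  have hsecond : ((W * (1 - S)) * ρ * (W * (1 - S))ᴴ).trace.re = T := by
    rw [trace_mul_mul_conjTranspose_mul_left hW, hS1]
  calc traceNorm (S * ρ * S - ρ)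
      ≤ ‖((W * S) * ρ * (1 - S)).trace‖ + ‖((W * (1 - S)) * ρ).trace‖ := by
        rw [hnorm, hsplit, trace_neg, Complex.neg_re, trace_add]
        exact (neg_le_abs _).trans ((Complex.abs_re_le_norm _).trans (norm_add_le _ _))
    _ ≤ √(Λ * ρ).trace.re * √T + √T * √ρ.trace.re := by
        have h1 := norm_trace_mul_mul_le hρ (W * S) (1 - S)
        have h2 := norm_trace_mul_mul_le hρ (W * (1 - S)) 1
        rw [hfirst, hS1] at h1
        simp only [hsecond, conjTranspose_one, one_mul, mul_one] at h2
        exact add_le_add h1 h2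
    _ ≤ 1 * √T + √T * 1 := by
        rw [htr, Complex.one_re, Real.sqrt_one]
        exact add_le_add_left
          (mul_le_mul_of_nonneg_right (Real.sqrt_le_one.2 hΛρ) (Real.sqrt_nonneg T)) _
    _ ≤ 2 * √(1 - (Λ * ρ).trace.re) := by
        linarith [Real.sqrt_le_sqrt hTle]

end GentleMeasurement

end

theorem gentle_operator_ensemble_general {X : Type*} [Fintype X] {d : ℕ}
    (p : X → ℝ) (hp : ∀ x, 0 ≤ p x) (hpsum : ∑ x, p x = 1)
    (ρ : X → Matrix (Fin d) (Fin d) ℂ)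
    (hρ : ∀ x, (ρ x).PosSemidef ∧ (ρ x).trace = 1)
    (Λ : Matrix (Fin d) (Fin d) ℂ) (hΛ : Λ.PosSemidef)
    (hΛ1 : ((1 : Matrix (Fin d) (Fin d) ℂ) - Λ).PosSemidef)
    (ε : ℝ)
    (htr : 1 - ε ≤ (Λ * ∑ x, (p x : ℂ) • ρ x).trace.re) :
    ∑ x, p x * traceNorm (hΛ.sqrt * ρ x * hΛ.sqrt - ρ x) ≤ 2 * Real.sqrt ε := by
  set δ : X → ℝ := fun x => 1 - (Λ * ρ x).trace.re
  have hδ0 x : 0 ≤ δ x := by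
    simpa [δ, (hρ x).2] using re_trace_mul_le_re_trace hΛ1 (hρ x).1
  have hδavg : ∑ x, p x • δ x ≤ ε := by
    have : (Λ * ∑ x, (p x : ℂ) • ρ x).trace.re = ∑ x, p x * (Λ * ρ x).trace.re := by
      simp [Finset.mul_sum, trace_sum]
    simp only [δ, smul_eq_mul, mul_sub, mul_one, Finset.sum_sub_distrib, hpsum]
    linarith
  calc ∑ x, p x * traceNorm (hΛ.sqrt * ρ x * hΛ.sqrt - ρ x)
      ≤ ∑ x, p x * (2 * √(δ x)) := by
        refine Finset.sum_le_sum fun x _ => mul_le_mul_of_nonneg_left ?_ (hp x)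
        rw [hΛ.sqrt_eq_cfcSqrt]
        exact traceNorm_sqrt_mul_mul_sqrt_sub_le hΛ.nonneg hΛ1 (hρ x).1 (hρ x).2
    _ = 2 * ∑ x, p x • √(δ x) := by
        rw [Finset.mul_sum]
        exact Finset.sum_congr rfl fun x _ => by rw [smul_eq_mul]; ring
    _ ≤ 2 * √(∑ x, p x • δ x) := by
        gcongr
        exact Real.strictConcaveOn_sqrt.concaveOn.le_map_sum (fun x _ => hp x) hpsum
          fun x _ => hδ0 x
    _ ≤ 2 * √ε := by gcongr

/-- Gentle operator lemma for ensembles: if `0 ≤ Λ ≤ I` has overlap at least `1 − ε` with the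
average state `ρ̄ = ∑ₓ p(x) ρₓ`, then on average `√Λ ρₓ √Λ` is `2√ε`-close to `ρₓ` in trace
distance. -/
theorem gentle_operator_ensemble {X : Type*} [Fintype X] {d : ℕ}
    (p : X → ℝ) (hp : ∀ x, 0 ≤ p x) (hpsum : ∑ x, p x = 1)
    (ρ : X → Matrix (Fin d) (Fin d) ℂ)
    (hρ : ∀ x, (ρ x).PosSemidef ∧ (ρ x).trace = 1)
    (Λ : Matrix (Fin d) (Fin d) ℂ) (hΛ : Λ.PosSemidef)
    (hΛ1 : ((1 : Matrix (Fin d) (Fin d) ℂ) - Λ).PosSemidef)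
    (ε : ℝ) (hε0 : 0 ≤ ε) (hε1 : ε ≤ 1)
    (htr : 1 - ε ≤ (Λ * ∑ x, (p x : ℂ) • ρ x).trace.re) :
    ∑ x, p x * traceNorm (hΛ.sqrt * ρ x * hΛ.sqrt - ρ x) ≤ 2 * Real.sqrt ε :=
  gentle_operator_ensemble_general p hp hpsum ρ hρ Λ hΛ hΛ1 ε htr
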